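/- Let n, k, N ≥ 1, let λ = (λ_1 ≥ λ_2 ≥ … ≥ λ_n ≥ 0) be a partition with at most n parts, and X = {x_1,…,x_n}. Then applying the substitution ∫_Y to the product of determinants det(x_i^{λ_{n−j+1}+j−1})_{1≤i,j≤n} · (det(x_i^{j−1})_{1≤i,j≤n})^{2k−1} (which equals S_λ(X)·Δ(X)^{2k}) yields the shifted Hankel hyperdeterminant: ∫_Y ( det(x_i^{λ_{n−j+1}+j−1}) · det(x_i^{j−1})^{2k−1} ) = ∑_{(σ_1,…,σ_{2k}) ∈ (S_n)^{2k}} sign(σ_1)⋯sign(σ_{2k}) · ∏_{i=1}^n Λ^{(σ_1(i)−1)+⋯+(σ_{2k}(i)−1)+λ_{n−σ_1(i)+1}}(Y), i.e. (1/n!)∫_Y S_λ(X)Δ(X)^{2k} = H^k_{reverse_n(λ)}(Y) where reverse_n(λ) = (λ_n, λ_{n−1}, …, λ_1). -/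

import Mathlib

/-- The scaled hyperdeterminant `DET` of a `k`-th order hypermatrix. -/
noncomputable def DET {R : Type*} [CommRing R] (n k : ℕ)
    (M : (Fin k → Fin n) → R) : R :=
  ∑ σ : Fin k → Equiv.Perm (Fin n),
    (∏ s, (Equiv.Perm.sign (σ s) : ℤ)) • ∏ i, M (fun s => σ s i)

/-- `Λ N p` is the `p`-th elementary symmetric polynomial in `N` variables,
with the convention that it vanishes for `p < 0` (and for `p > N`). -/
noncomputable def Λ (N : ℕ) (p : ℤ) : MvPolynomial (Fin N) ℤ :=
  if 0 ≤ p then MvPolynomial.esymm (Fin N) ℤ p.toNat else 0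

/-- The substitution `∫_Y` sending each monomial `x_1^{d_1} ⋯ x_n^{d_n}` to
`Λ^{d_1}(Y) ⋯ Λ^{d_n}(Y)`, extended `ℤ`-linearly. -/
noncomputable def intY (n N : ℕ) (P : MvPolynomial (Fin n) ℤ) :
    MvPolynomial (Fin N) ℤ :=
  ∑ d ∈ P.support, P.coeff d • ∏ i, Λ N ((d i : ℤ))

/-!
Expanding each of the `2k` alternants by the Leibniz formula turns their product into a signed
sum, over `2k`-tuples of permutations `σ`, of monomials `∏ᵢ xᵢ^{∑ₛ aₛ(σₛ i)}`, where `aₛ` is the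
exponent row of the `s`-th alternant. Since `∫_Y` is linear and sends such a monomial to
`∏ᵢ Λ^{∑ₛ aₛ(σₛ i)}(Y)`, the result is the hyperdeterminant of `τ ↦ Λ^{∑ₛ aₛ(τₛ)}`. Only the first
alternant has exponents `λ_{n-j} + j` instead of `j`, which produces the shift by the reversed
partition in the first slot.
-/

open MvPolynomial

noncomputable def intYₗ (n N : ℕ) : MvPolynomial (Fin n) ℤ →ₗ[ℤ] MvPolynomial (Fin N) ℤ :=
  Finsupp.lsum ℤ (fun d : Fin n →₀ ℕ => LinearMap.toSpanSingleton ℤ _ (∏ i, Λ N (d i))) ∘ₗ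
    (AddMonoidAlgebra.coeffLinearEquiv ℤ).toLinearMap

theorem intYₗ_apply (n N : ℕ) (P : MvPolynomial (Fin n) ℤ) : intYₗ n N P = intY n N P := rfl

theorem intY_prod_X_pow (n N : ℕ) (e : Fin n → ℕ) :
    intY n N (∏ i, X i ^ e i) = ∏ i, Λ N (e i) := by
  have hmon : ∏ i, (X i : MvPolynomial (Fin n) ℤ) ^ e i
      = monomial (Finsupp.equivFunOnFinite.symm e) 1 := by
    rw [monomial_eq, C_1, one_mul, Finsupp.prod_fintype _ _ fun _ => pow_zero _]
    rfl
  rw [hmon, intY, support_monomial, if_neg one_ne_zero, Finset.sum_singleton, coeff_monomial,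
    if_pos rfl, one_smul]
  rfl

theorem det_of_X_pow {R σ : Type*} [CommRing R] [Fintype σ] [DecidableEq σ] (a : σ → ℕ) :
    (Matrix.of fun i j : σ => (X i : MvPolynomial σ R) ^ a j).det
      = ∑ π : Equiv.Perm σ, Equiv.Perm.sign π • ∏ i, X i ^ a (π i) := by
  rw [← Matrix.det_transpose, Matrix.det_apply]
  rfl

theorem prod_det_of_X_pow {R σ : Type*} [CommRing R] [Fintype σ] [DecidableEq σ] (m : ℕ)
    (a : Fin m → σ → ℕ) :
    ∏ s, (Matrix.of fun i j : σ => (X i : MvPolynomial σ R) ^ a s j).det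
      = ∑ π : Fin m → Equiv.Perm σ,
          (∏ s, (Equiv.Perm.sign (π s) : ℤ)) • ∏ i, X i ^ ∑ s, a s (π s i) := by
  simp only [det_of_X_pow, Finset.prod_univ_sum, Fintype.piFinset_univ]
  refine Finset.sum_congr rfl fun π _ => ?_
  simp only [Units.smul_def, zsmul_eq_mul, Finset.prod_mul_distrib, Int.cast_prod]
  rw [Finset.prod_comm (f := fun s i => (X i : MvPolynomial σ R) ^ a s (π s i))]
  simp only [Finset.prod_pow_eq_pow_sum]

theorem intY_prod_det_of_X_pow (n N m : ℕ) (a : Fin m → Fin n → ℕ) :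
    intY n N (∏ s, (Matrix.of fun i j : Fin n => (X i : MvPolynomial (Fin n) ℤ) ^ a s j).det)
      = DET n m (fun τ => Λ N (∑ s, a s (τ s) : ℕ)) := by
  rw [prod_det_of_X_pow, ← intYₗ_apply, map_sum]
  simp only [map_zsmul, intYₗ_apply, intY_prod_X_pow, DET]

theorem prod_comp_pi_single {M ι β : Type*} [CommMonoid M] [Fintype ι] [DecidableEq ι] [Zero β]
    (f : β → M) (z : ι) (b : β) :
    ∏ s, f (Pi.single (M := fun _ => β) z b s) = f b * f 0 ^ (Fintype.card ι - 1) := by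
  rw [← Finset.mul_prod_erase _ _ (Finset.mem_univ z), Pi.single_eq_same,
    Finset.prod_congr rfl fun s hs => by rw [Pi.single_eq_of_ne (Finset.ne_of_mem_erase hs)],
    Finset.prod_const, Finset.card_erase_of_mem (Finset.mem_univ z), Finset.card_univ]

/-- Applying `∫_Y` to `S_λ(X) Δ(X)^{2k}`, written as the product of alternants
`det(x_i^{λ_{n−j+1}+j−1}) ⋅ det(x_i^{j−1})^{2k−1}`, yields the shifted Hankel
hyperdeterminant: `(1/n!) ∫_Y S_λ(X) Δ(X)^{2k} = H^k_{reverseₙ(λ)}(Y)`. -/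
theorem intY_schur_vandermonde_pow_eq_shifted_hankel
    (n k N : ℕ) (hk : 1 ≤ k)
    (lam : Fin n → ℕ) :
    intY n N
        ((Matrix.of fun i j : Fin n =>
            MvPolynomial.X i ^ (lam ⟨n - 1 - (j : ℕ), by omega⟩ + (j : ℕ))).det *
          (Matrix.of fun i j : Fin n =>
            (MvPolynomial.X i : MvPolynomial (Fin n) ℤ) ^ (j : ℕ)).det ^ (2 * k - 1))
      = DET n (2 * k) (fun i =>
          Λ N ((∑ s, ((i s : ℕ) : ℤ))
            + (lam ⟨n - 1 - (i ⟨0, by omega⟩ : ℕ), by omega⟩ : ℤ))) := by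
  set z : Fin (2 * k) := ⟨0, by omega⟩
  set μ : Fin n → ℕ := fun j => lam ⟨n - 1 - (j : ℕ), by omega⟩
  have hsplit := prod_comp_pi_single (fun ν : Fin n → ℕ =>
    (Matrix.of fun i j : Fin n => (X i : MvPolynomial (Fin n) ℤ) ^ (ν j + j)).det) z μ
  simp only [Fintype.card_fin, Pi.zero_apply, zero_add] at hsplit
  rw [← hsplit, intY_prod_det_of_X_pow]
  congr 1
  funext τ
  have hsum : ∑ s, ((Pi.single z μ : Fin (2 * k) → Fin n → ℕ) s (τ s) + (τ s : ℕ))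
      = ∑ s, (τ s : ℕ) + μ (τ z) := by
    rw [Finset.sum_add_distrib,
      Fintype.sum_eq_single z fun s hs => by rw [Pi.single_eq_of_ne hs, Pi.zero_apply],
      Pi.single_eq_same, add_comm]
  rw [hsum]
  push_cast
  rfl
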